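/- arXiv:1710.05177 — 3 statements merged into one kernel-verified Lean document; each statement's English description precedes it below -/
import Mathlib

section
/- The interval topology T_in^→ induced by the irreflexive horismos relation on Minkowski space ℝ⁴ is not equal to the Zeeman Z topology (correcting the claim of Theorem 2.1 of an earlier paper that horismos induces the Zeeman Z topology). -/
open Topology Set

/-- Minkowski space: `ℝ⁴` with the Euclidean metric structure. -/
abbrev M : Type := EuclideanSpace ℝ (Fin 4)

/-- The characteristic quadratic form `Q(x) = x₀² − x₁² − x₂² − x₃²`. -/
noncomputable def Q (x : M) : ℝ := x 0 ^ 2 - x 1 ^ 2 - x 2 ^ 2 - x 3 ^ 2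

/-- The Euclidean topology `E` on `M`. -/
noncomputable def E : TopologicalSpace M := inferInstance

/-- The light cone of `x`. -/
def lightCone (x : M) : Set M := {y | Q (y - x) = 0}

/-- The time cone of `x`. -/
def timeCone (x : M) : Set M := {x} ∪ {y | Q (y - x) > 0}

/-- The space cone of `x`. -/
def spaceCone (x : M) : Set M := {x} ∪ {y | Q (y - x) < 0}

/-- The basic open sets `Z_ε(x) = B_ε^E(x) ∩ (C^T(x) ∪ C^S(x))` of the Zeeman `Z` topology. -/
def Zset (x : M) (ε : ℝ) : Set M := Metric.ball x ε ∩ (timeCone x ∪ spaceCone x)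

/-- The Zeeman `Z` topology, generated by the base of the sets `Z_ε(x)`. -/
def ZeemanZ : TopologicalSpace M :=
  TopologicalSpace.generateFrom {s | ∃ x : M, ∃ ε : ℝ, 0 < ε ∧ s = Zset x ε}

/-- The irreflexive horismos relation `x → y`. -/
def horismos (x y : M) : Prop := y ≠ x ∧ Q (y - x) = 0 ∧ (y - x) 0 > 0

/-- The future null cone `N⁺(x)`. -/
def Nplus (x : M) : Set M := {y | horismos x y}

/-- The past null cone `N⁻(x)`. -/
def Nminus (x : M) : Set M := {y | horismos y x}

/-- The interval topology `T_in^→` induced by the irreflexive horismos relation,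
generated by the subbase of complements of future and past null cones. -/
def Tin : TopologicalSpace M :=
  TopologicalSpace.generateFrom
    ({s | ∃ x : M, s = univ \ Nplus x} ∪ {s | ∃ x : M, s = univ \ Nminus x})

/-- A time axis: an affine line with timelike direction. -/
def IsTimeAxis (L : Set M) : Prop :=
  ∃ a v : M, Q v > 0 ∧ L = {p | ∃ t : ℝ, p = a + t • v}

/-- A space axis: an affine 3-flat whose direction is a 3-dimensional subspace
on which `Q` is negative definite. -/
def IsSpaceAxis (L : Set M) : Prop :=
  ∃ a : M, ∃ W : Submodule ℝ M, Module.finrank ℝ W = 3 ∧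
    (∀ w ∈ W, w ≠ 0 → Q w < 0) ∧ L = {p | ∃ w ∈ W, p = a + w}

/-- A topology `t` on `M` induces the Euclidean subspace topology on every time axis
and on every space axis. -/
def InducesEuclideanOnAxes (t : TopologicalSpace M) : Prop :=
  (∀ L : Set M, IsTimeAxis L →
    TopologicalSpace.induced (Subtype.val : L → M) t =
      TopologicalSpace.induced (Subtype.val : L → M) E) ∧
  (∀ L : Set M, IsSpaceAxis L →
    TopologicalSpace.induced (Subtype.val : L → M) t =
      TopologicalSpace.induced (Subtype.val : L → M) E)

/-- Zeeman's Fine topology `F`: the finest topology on `M` inducing the Euclidean topology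
on every time and space axis.  (In Mathlib's lattice of topologies, `≤` means "finer",
so the finest such topology is the infimum of the family.) -/
noncomputable def FineF : TopologicalSpace M :=
  sInf {t : TopologicalSpace M | InducesEuclideanOnAxes t}

/-- The chronological order `x ≪ y`. -/
def chron (x y : M) : Prop := Q (y - x) > 0 ∧ (y - x) 0 > 0

/-!
The complement of a null cone meets every line with non-null direction in all but at most two
points, since `Q` restricted to such a line is a genuine quadratic polynomial. Hence every
`T_in^→`-neighbourhood of any point contains all but finitely many points of the spacelike line
`ℝ e₁`, whereas the Zeeman neighbourhood `Z_1(0)` contains only its bounded piece.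
-/

open Filter

lemma Q_neg (v : M) : Q (-v) = Q v := by
  simp only [Q, PiLp.neg_apply]
  ring

lemma Q_add_smul (w v : M) (t : ℝ) :
    Q (w + t • v) =
      Q v * t ^ 2 + 2 * (w 0 * v 0 - w 1 * v 1 - w 2 * v 2 - w 3 * v 3) * t + Q w := by
  simp only [Q, PiLp.add_apply, PiLp.smul_apply, smul_eq_mul]
  ring

lemma finite_setOf_quadratic_eq_zero {R : Type*} [CommRing R] [IsDomain R] {a : R} (ha : a ≠ 0)
    (b c : R) : {t : R | a * t ^ 2 + b * t + c = 0}.Finite := by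
  open Polynomial in
  have hp : C a * X ^ 2 + C b * X + C c ≠ 0 := by
    intro h0
    simpa [ha] using congrArg (coeff · 2) h0
  simpa using finite_setOfPred_isRoot hp

lemma finite_setOf_Q_add_smul_eq_zero (w : M) {v : M} (hv : Q v ≠ 0) :
    {t : ℝ | Q (w + t • v) = 0}.Finite := by
  simpa only [Q_add_smul] using finite_setOf_quadratic_eq_zero hv _ _

lemma finite_setOf_line_mem_lightCone (a : M) {v : M} (hv : Q v ≠ 0) (x : M) :
    {t : ℝ | a + t • v ∈ lightCone x}.Finite := by
  simpa only [lightCone, Set.mem_ofPred_eq, add_sub_right_comm]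
    using finite_setOf_Q_add_smul_eq_zero (a - x) hv

lemma Nplus_subset_lightCone (x : M) : Nplus x ⊆ lightCone x := fun _ hy => hy.2.1

lemma Nminus_subset_lightCone (x : M) : Nminus x ⊆ lightCone x := fun y hy => by
  simpa only [lightCone, Set.mem_ofPred_eq, ← neg_sub y x, Q_neg] using hy.2.1

theorem tendsto_line_cofinite_nhds_Tin (a : M) {v : M} (hv : Q v ≠ 0) (y : M) :
    Tendsto (fun t : ℝ => a + t • v) cofinite (@nhds M Tin y) := by
  rw [Tin, TopologicalSpace.nhds_generateFrom]
  refine le_iInf₂ fun s hs => tendsto_principal.2 ?_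
  obtain ⟨x, hx⟩ : ∃ x, sᶜ ⊆ lightCone x := by
    rcases hs.2 with ⟨x, rfl⟩ | ⟨x, rfl⟩
    · exact ⟨x, by rw [← compl_eq_univ_sdiff, compl_compl]; exact Nplus_subset_lightCone x⟩
    · exact ⟨x, by rw [← compl_eq_univ_sdiff, compl_compl]; exact Nminus_subset_lightCone x⟩
  exact eventually_cofinite.2 <|
    (finite_setOf_line_mem_lightCone a hv x).subset fun _ ht => hx ht

lemma Zset_mem_nhds_zeemanZ (x : M) {ε : ℝ} (hε : 0 < ε) : Zset x ε ∈ @nhds M ZeemanZ x :=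
  @IsOpen.mem_nhds M ZeemanZ x _ (TopologicalSpace.isOpen_generateFrom_of_mem ⟨x, ε, hε, rfl⟩)
    ⟨Metric.mem_ball_self hε, Or.inl (Or.inl rfl)⟩

/-- The interval topology `T_in^→` induced by the irreflexive horismos is
not equal to the Zeeman `Z` topology. -/
theorem Tin_ne_zeemanZ : Tin ≠ ZeemanZ := by
  intro h
  set e₁ : M := PiLp.single 2 1 1
  have hQ : Q e₁ ≠ 0 := by norm_num [e₁, Q, PiLp.single_apply, Fin.ext_iff]
  have hline := tendsto_line_cofinite_nhds_Tin 0 hQ 0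
  rw [h] at hline
  have hball : ∀ᶠ t : ℝ in cofinite, |t| < 1 :=
    (hline.eventually_mem (Zset_mem_nhds_zeemanZ 0 one_pos)).mono fun t ht => by
      simpa [e₁, norm_smul, PiLp.norm_single] using ht.1
  have hfar : ∃ᶠ t : ℝ in cofinite, 1 ≤ |t| :=
    frequently_cofinite_iff_infinite.2 <|
      (Set.Ici_infinite 1).mono fun t ht => ht.out.trans (le_abs_self t)
  obtain ⟨t, hlt, hle⟩ := (hball.and_frequently hfar).exists
  linarith
end

section
/- The Zeeman Z topology on Minkowski space ℝ⁴ is strictly finer than the Euclidean topology E. -/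
/-!
Each Euclidean-open set is the union of the sets `Z_ε(x)` over its points `x`, with the balls
`B_ε^E(x)` inside it, so `E`-open sets are `Z`-open. Conversely, `Z_ε(x)` omits every point of
the light cone of `x` other than `x`, and there are such points `x + t • (1, 1, 0, 0)` arbitrarily
close to `x`; hence `Z_ε(x)` is not a Euclidean neighbourhood of its own centre.
-/

open Topology Set

open Filter

lemma Q_smul (c : ℝ) (x : M) : Q (c • x) = c ^ 2 * Q x := by
  simp only [Q, PiLp.smul_apply, smul_eq_mul]
  ring

lemma isOpen_zeemanZ_Zset (x : M) {ε : ℝ} (hε : 0 < ε) : IsOpen[ZeemanZ] (Zset x ε) :=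
  TopologicalSpace.GenerateOpen.basic _ ⟨x, ε, hε, rfl⟩

lemma self_mem_Zset (x : M) {ε : ℝ} (hε : 0 < ε) : x ∈ Zset x ε :=
  ⟨Metric.mem_ball_self hε, Or.inl (Or.inl rfl)⟩

lemma notMem_Zset_of_Q_eq_zero {x y : M} {ε : ℝ} (hne : y ≠ x) (hQ : Q (y - x) = 0) :
    y ∉ Zset x ε := by
  rintro ⟨-, (hx | hpos) | (hx | hneg)⟩
  · exact hne hx
  · exact hpos.ne' hQ
  · exact hne hx
  · exact hneg.ne hQ

lemma isOpen_zeemanZ_of_isOpen {s : Set M} (hs : IsOpen[E] s) : IsOpen[ZeemanZ] s := by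
  choose! ε hε hball using Metric.isOpen_iff.mp hs
  have hunion : s = ⋃ x ∈ s, Zset x (ε x) := by
    refine Subset.antisymm (fun x hx => mem_biUnion hx (self_mem_Zset x (hε x hx))) ?_
    exact iUnion₂_subset fun x hx => (inter_subset_left).trans (hball x hx)
  rw [hunion]
  exact @isOpen_biUnion M M ZeemanZ _ _ fun x hx => isOpen_zeemanZ_Zset x (hε x hx)

lemma Q_lightlike : Q !₂[1, 1, 0, 0] = 0 := by
  simp [Q]

lemma lightlike_ne_zero : (!₂[1, 1, 0, 0] : M) ≠ 0 := by
  intro h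
  simpa using congrArg (· 0) h

lemma not_isOpen_Zset (x : M) {ε : ℝ} (hε : 0 < ε) : ¬ IsOpen[E] (Zset x ε) := by
  intro hopen
  set v : M := !₂[1, 1, 0, 0]
  have hline : Tendsto (fun t : ℝ => x + t • v) (𝓝[≠] 0) (𝓝 x) :=
    ((continuous_const.add (continuous_id.smul continuous_const)).tendsto' 0 x
      (by simp)).mono_left nhdsWithin_le_nhds
  have hnhds : Zset x ε ∈ 𝓝 x := hopen.mem_nhds (self_mem_Zset x hε)
  obtain ⟨t, hmem, ht⟩ :=
    ((hline.eventually hnhds).and self_mem_nhdsWithin).exists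
  refine notMem_Zset_of_Q_eq_zero ?_ ?_ hmem
  · rw [Ne, add_eq_left]
    exact smul_ne_zero ht lightlike_ne_zero
  · rw [add_sub_cancel_left, Q_smul, Q_lightlike, mul_zero]

/-- The Zeeman `Z` topology is strictly finer than the Euclidean
topology `E`: every `E`-open set is `Z`-open and some `Z`-open set is not `E`-open. -/
theorem zeemanZ_strictly_finer :
    (∀ s : Set M, IsOpen[E] s → IsOpen[ZeemanZ] s) ∧
    (∃ s : Set M, IsOpen[ZeemanZ] s ∧ ¬ IsOpen[E] s) :=
  ⟨fun _ => isOpen_zeemanZ_of_isOpen,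
    ⟨Zset 0 1, isOpen_zeemanZ_Zset 0 one_pos, not_isOpen_Zset 0 one_pos⟩⟩
end

section
/- (Zeeman) Let f : [0,1] → ℝ⁴ be continuous when ℝ⁴ carries the Fine topology F, and suppose f is strictly order-preserving for the chronological order (s < t implies f(s) ≪ f(t)). Then the image f([0,1]) is a piecewise linear path consisting of a finite number of intervals along time axes: there exist 0 = t₀ < t₁ < ... < tₙ = 1 such that for each i, the image f([tᵢ, tᵢ₊₁]) is contained in an affine line {a + s·v : s ∈ ℝ} with Q(v) > 0. -/
open Topology Set

/-!
If near some parameter `t` the image of `f` on one side of `t` lay on no single time axis through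
`f t`, then, that image being Euclidean-connected and missing `f t`, it would meet infinitely many
lines through `f t`, and one could choose `sₙ → t` with the points `f sₙ` on pairwise distinct
lines through `f t`. The complement of `{f sₙ}` is nevertheless `F`-open: a time axis through `f t`
meets `{f sₙ}` in at most one point, a space axis through `f t` misses it (the points are timelike
to `f t`), and an axis avoiding `f t` meets it in a closed set since `f sₙ → f t`. This
contradicts `F`-continuity at `t`. Hence every parameter has one-sided neighbourhoods mapped into
time axes, and a supremum argument on `[0,1]` chains finitely many of them together.
-/

open Filter

lemma exists_relSeries_of_forall_eventually {α : Type*} [ConditionallyCompleteLinearOrder α]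
    [TopologicalSpace α] [OrderTopology α] [DenselyOrdered α] {R : α → α → Prop} {a b : α}
    (hab : a ≤ b) (hleft : ∀ t ∈ Ioc a b, ∀ᶠ x in 𝓝[<] t, R x t)
    (hright : ∀ t ∈ Ico a b, ∀ᶠ y in 𝓝[>] t, R t y) :
    ∃ p : RelSeries {q : α × α | q.1 < q.2 ∧ R q.1 q.2}, p.head = a ∧ p.last = b := by
  set S := {y ∈ Icc a b | ∃ p : RelSeries {q : α × α | q.1 < q.2 ∧ R q.1 q.2},
    p.head = a ∧ p.last = y}
  have hS : BddAbove S := ⟨b, fun y hy => hy.1.2⟩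
  have haS : a ∈ S := ⟨⟨le_rfl, hab⟩, RelSeries.singleton _ a, rfl, rfl⟩
  have hac : a ≤ sSup S := le_csSup hS haS
  have hcb : sSup S ≤ b := csSup_le ⟨a, haS⟩ fun y hy => hy.1.2
  have extend : ∀ y ∈ S, ∀ z ∈ Icc a b, y < z → R y z → z ∈ S := by
    rintro y ⟨-, p, hpa, hpy⟩ z hz hyz hR
    exact ⟨hz, p.snoc z (by rw [hpy]; exact ⟨hyz, hR⟩), by simpa using hpa, by simp⟩
  have hcS : sSup S ∈ S := by
    rcases hac.eq_or_lt with h | h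
    · exact h ▸ haS
    obtain ⟨l, hl, hlR⟩ := (mem_nhdsLT_iff_exists_Ioo_subset' h).1 (hleft _ ⟨h, hcb⟩)
    obtain ⟨y, hyS, hly⟩ := exists_lt_of_lt_csSup ⟨a, haS⟩ hl
    rcases (le_csSup hS hyS).eq_or_lt with hy | hy
    · exact hy ▸ hyS
    · exact extend y hyS _ ⟨hac, hcb⟩ hy (hlR ⟨hly, hy⟩)
  rcases hcb.eq_or_lt with hb | hb
  · obtain ⟨-, p, hpa, hpb⟩ := hcS
    exact ⟨p, hpa, hpb.trans hb⟩
  obtain ⟨u, hu, huR⟩ := (mem_nhdsGT_iff_exists_Ioo_subset' hb).1 (hright _ ⟨hac, hb⟩)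
  obtain ⟨z, hcz, hz⟩ := exists_between (lt_min hu hb)
  have hzS := extend _ hcS z ⟨hac.trans hcz.le, hz.le.trans (min_le_right _ _)⟩ hcz
    (huR ⟨hcz, hz.trans_le (min_le_left _ _)⟩)
  exact absurd (le_csSup hS hzS) (not_le.2 hcz)

section Line

variable {V : Type*} [AddCommGroup V] [Module ℝ V]

def line (a v : V) : Set V := {p | ∃ t : ℝ, p = a + t • v}

lemma mem_line_self (a v : V) : a ∈ line a v := ⟨0, by simp⟩

lemma line_eq_of_mem {a v y : V} (hy : y ∈ line a v) : line a v = line y v := by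
  obtain ⟨s, rfl⟩ := hy
  ext p
  constructor
  · rintro ⟨t, rfl⟩; exact ⟨t - s, by rw [sub_smul]; abel⟩
  · rintro ⟨t, rfl⟩; exact ⟨s + t, by rw [add_smul]; abel⟩

lemma line_eq_line_sub_of_mem {y v z : V} (hz : z ∈ line y v) (hne : z ≠ y) :
    line y v = line y (z - y) := by
  obtain ⟨c, rfl⟩ := hz
  have hc : c ≠ 0 := by rintro rfl; simp at hne
  ext p
  simp only [line, add_sub_cancel_left, smul_smul, mem_ofPred_eq]
  constructor
  · rintro ⟨t, rfl⟩; exact ⟨t / c, by rw [div_mul_cancel₀ _ hc]⟩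
  · rintro ⟨t, rfl⟩; exact ⟨t * c, rfl⟩

end Line

lemma isClosed_line {V : Type*} [NormedAddCommGroup V] [NormedSpace ℝ V] (a v : V) :
    IsClosed (line a v) := by
  have : line a v = (a + ·) '' (ℝ ∙ v : Set V) := by
    ext p
    simp only [line, mem_image, SetLike.mem_coe, Submodule.mem_span_singleton, mem_ofPred_eq]
    constructor
    · rintro ⟨t, rfl⟩; exact ⟨t • v, ⟨t, rfl⟩, rfl⟩
    · rintro ⟨_, ⟨t, rfl⟩, rfl⟩; exact ⟨t, rfl⟩
  rw [this]
  exact (Homeomorph.addLeft a).isClosedMap _ (Submodule.closed_of_finiteDimensional _)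

/-- Lines through `y` meet only at `y`, so away from `y` they are disjoint closed sets. -/
lemma IsPreconnected.exists_subset_line_of_subset_biUnion {V : Type*} [NormedAddCommGroup V]
    [NormedSpace ℝ V] {K : Set V} (hK : IsPreconnected K) (hKne : K.Nonempty) {y : V}
    (hy : y ∉ K) (G : Finset V) (hG : K ⊆ ⋃ v ∈ G, line y v) : ∃ v ∈ G, K ⊆ line y v := by
  classical
  induction G using Finset.induction_on with
  | empty => obtain ⟨z, hz⟩ := hKne; simpa using hG hz
  | insert v₀ G _ ih =>
    rw [Finset.set_biUnion_insert] at hG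
    have hB : IsClosed (⋃ v ∈ G, line y v) :=
      G.finite_toSet.isClosed_biUnion fun v _ => isClosed_line y v
    by_cases hmeet : (K ∩ (line y v₀ ∩ ⋃ v ∈ G, line y v)).Nonempty
    · obtain ⟨z, hzK, hz₀, hzG⟩ := hmeet
      obtain ⟨w, hw, hzw⟩ := mem_iUnion₂.1 hzG
      have hzy : z ≠ y := fun h => hy (h ▸ hzK)
      have heq : line y v₀ = line y w := by
        rw [line_eq_line_sub_of_mem hz₀ hzy, line_eq_line_sub_of_mem hzw hzy]
      obtain ⟨v, hv, hKv⟩ := ih fun p hp => (hG hp).elim (fun h => mem_biUnion hw (heq ▸ h)) id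
      exact ⟨v, Finset.mem_insert_of_mem hv, hKv⟩
    · rcases isPreconnected_iff_subset_of_disjoint_closed.1 hK _ _ (isClosed_line y v₀) hB hG
        (not_nonempty_iff_eq_empty.1 hmeet) with h | h
      · exact ⟨v₀, Finset.mem_insert_self _ _, h⟩
      · obtain ⟨v, hv, hKv⟩ := ih h
        exact ⟨v, Finset.mem_insert_of_mem hv, hKv⟩

lemma tendsto_of_dist_succ_le_half {X : Type*} [PseudoMetricSpace X] {s : ℕ → X} {t : X}
    (h : ∀ n, dist (s (n + 1)) t ≤ dist (s n) t / 2) : Tendsto s atTop (𝓝 t) := by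
  have hgeom : ∀ n, dist (s n) t ≤ dist (s 0) t * (1 / 2) ^ n := by
    intro n
    induction n with
    | zero => simp
    | succ n ih => rw [pow_succ]; linarith [h n]
  refine tendsto_iff_dist_tendsto_zero.2 (squeeze_zero (fun _ => dist_nonneg) hgeom ?_)
  simpa using (tendsto_pow_atTop_nhds_zero_of_lt_one (by norm_num : (0 : ℝ) ≤ 1 / 2)
    (by norm_num)).const_mul (dist (s 0) t)

lemma Q_sub_comm (x y : M) : Q (x - y) = Q (y - x) := by
  simp only [Q, PiLp.sub_apply]; ring

lemma ne_of_Q_sub_pos {x y : M} (h : 0 < Q (x - y)) : x ≠ y := by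
  rintro rfl; simp [Q] at h

lemma IsTimeAxis.eq_line_of_mem {A : Set M} (hA : IsTimeAxis A) {y : M} (hy : y ∈ A) :
    ∃ v, A = line y v := by
  obtain ⟨a, v, -, rfl⟩ := hA
  exact ⟨v, line_eq_of_mem hy⟩

lemma IsSpaceAxis.Q_sub_neg {A : Set M} (hA : IsSpaceAxis A) {x y : M} (hx : x ∈ A) (hy : y ∈ A)
    (hne : y ≠ x) : Q (y - x) < 0 := by
  obtain ⟨a, W, -, hW, rfl⟩ := hA
  obtain ⟨w₀, hw₀, rfl⟩ := hx
  obtain ⟨w, hw, rfl⟩ := hy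
  rw [add_sub_add_left_eq_sub]
  exact hW _ (W.sub_mem hw hw₀) (sub_ne_zero.2 fun h => hne (h ▸ rfl))

lemma fineF_le_E : FineF ≤ E := sInf_le ⟨fun _ _ => rfl, fun _ _ => rfl⟩

def axisTopology : TopologicalSpace M :=
  ⨆ A : {A : Set M // IsTimeAxis A ∨ IsSpaceAxis A},
    .coinduced ((↑) : A.1 → M) instTopologicalSpaceSubtype

lemma inducesEuclideanOnAxes_axisTopology : InducesEuclideanOnAxes axisTopology := by
  have hle : axisTopology ≤ E := iSup_le fun A => continuous_subtype_val.coinduced_le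
  have key : ∀ A : Set M, IsTimeAxis A ∨ IsSpaceAxis A →
      TopologicalSpace.induced ((↑) : A → M) axisTopology = .induced ((↑) : A → M) E :=
    fun A hA => le_antisymm (induced_mono hle)
      (coinduced_le_iff_le_induced.1 <|
        le_iSup_of_le (ι := {A : Set M // IsTimeAxis A ∨ IsSpaceAxis A}) ⟨A, hA⟩ le_rfl)
  exact ⟨fun A hA => key A (.inl hA), fun A hA => key A (.inr hA)⟩

lemma isOpen_fineF_of_forall_axis {U : Set M}
    (hU : ∀ A : Set M, IsTimeAxis A ∨ IsSpaceAxis A → IsOpen ((↑) ⁻¹' U : Set A)) :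
    IsOpen[FineF] U :=
  (sInf_le inducesEuclideanOnAxes_axisTopology : FineF ≤ axisTopology) U
    (isOpen_iSup_iff.2 fun A => hU A.1 A.2)

lemma not_tendsto_fineF_of_forall_finite {x : ℕ → M} {y : M} (hQ : ∀ n, 0 < Q (x n - y))
    (hfin : ∀ v, {n | x n ∈ line y v}.Finite) : ¬ Tendsto x atTop (@nhds M FineF y) := by
  intro hF
  have hE : Tendsto x atTop (𝓝 y) := hF.mono_right (nhds_mono fineF_le_E)
  have hne : ∀ n, x n ≠ y := fun n => ne_of_Q_sub_pos (hQ n)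
  have hclosed : ∀ A : Set M, IsTimeAxis A ∨ IsSpaceAxis A →
      IsClosed ((↑) ⁻¹' range x : Set A) := by
    intro A hA
    by_cases hyA : y ∈ A
    · rcases hA with hA | hA
      · obtain ⟨v, rfl⟩ := hA.eq_line_of_mem hyA
        convert (((hfin v).image x).preimage Subtype.val_injective.injOn).isClosed using 1
        ext ⟨p, hp⟩
        simp only [mem_preimage, mem_range, mem_image, mem_ofPred_eq]
        exact ⟨fun ⟨n, hn⟩ => ⟨n, hn ▸ hp, hn⟩, fun ⟨n, _, hn⟩ => ⟨n, hn⟩⟩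
      · convert isClosed_empty
        refine eq_empty_iff_forall_notMem.2 fun ⟨p, hp⟩ ⟨n, hn⟩ => ?_
        exact (hQ n).not_gt (hA.Q_sub_neg hyA (hn ▸ hp) (hne n))
    · convert hE.isCompact_insert_range.isClosed.preimage continuous_subtype_val using 1
      ext ⟨p, hp⟩
      simp only [mem_preimage, mem_insert_iff]
      exact (or_iff_right fun (h : p = y) => hyA (h ▸ hp)).symm
  have hopen : IsOpen[FineF] (range x)ᶜ :=
    isOpen_fineF_of_forall_axis fun A hA => (hclosed A hA).isOpen_compl
  obtain ⟨n, hn⟩ := (hF.eventually_mem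
    (@IsOpen.mem_nhds M FineF _ _ hopen fun ⟨n, hn⟩ => hne n hn)).exists
  exact hn ⟨n, rfl⟩

lemma exists_eventually_mem_line {f : ℝ → M} {I : Set ℝ} (hcont : @ContinuousOn ℝ M _ FineF f I)
    {t : ℝ} (ht : t ∈ I) (hQ : ∀ s ∈ I, s ≠ t → 0 < Q (f s - f t)) {l : Filter ℝ} [l.NeBot]
    (hlt : l ≤ 𝓝 t) (hl : I \ {t} ∈ l) {ι : Type*} {p : ι → Prop} {S : ι → Set ℝ}
    (hbasis : l.HasBasis p S) (hS : ∀ i, p i → IsPreconnected (S i)) :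
    ∃ v, Q v > 0 ∧ ∀ᶠ s in l, f s ∈ line (f t) v := by
  by_contra! hfreq
  have hE : ContinuousOn f I := fun s hs => (hcont s hs).mono_right (nhds_mono fineF_le_E)
  have avoid : ∀ U ∈ l, ∀ G : Finset M, (∀ v ∈ G, 0 < Q v) →
      ∃ s ∈ U ∩ (I \ {t}), ∀ v ∈ G, f s ∉ line (f t) v := by
    intro U hU G hG
    obtain ⟨i, hi, hVU⟩ := hbasis.mem_iff.1 (inter_mem hU hl)
    by_contra! hcov
    have hVI : S i ⊆ I := hVU.trans (inter_subset_right.trans sdiff_subset)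
    obtain ⟨v, hv, hVv⟩ := ((hS i hi).image f (hE.mono hVI)).exists_subset_line_of_subset_biUnion
      ((Filter.nonempty_of_mem (hbasis.mem_of_mem hi)).image f) (y := f t)
      (fun ⟨s, hs, hst⟩ => ne_of_Q_sub_pos (hQ s (hVI hs) (hVU hs).2.2) hst) G
      (by rintro _ ⟨s, hs, rfl⟩; obtain ⟨v, hv, h⟩ := hcov s (hVU hs); exact mem_biUnion hv h)
    obtain ⟨s, hs, hs'⟩ := ((hfreq v (hG v hv)).and_eventually
      (mem_of_superset (hbasis.mem_of_mem hi) fun s hs => hVv (mem_image_of_mem f hs))).exists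
    exact hs hs'
  obtain ⟨s, hsI, hsr⟩ := exists_seq_of_forall_finset_exists (· ∈ I \ {t})
    (fun x y => dist y t ≤ dist x t / 2 ∧ f y ∉ line (f t) (f x - f t)) fun G hG => by
      have hU : {y | ∀ x ∈ G, dist y t ≤ dist x t / 2} ∈ l := hlt <| (eventually_all_finset G).2
        fun x hx => Metric.closedBall_mem_nhds t (half_pos (dist_pos.2 (hG x hx).2))
      obtain ⟨y, ⟨hyU, hyI⟩, hy⟩ := avoid _ hU (G.image fun x => f x - f t) <| by
        simpa using fun x hx => hQ x (hG x hx).1 (hG x hx).2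
      exact ⟨y, hyI, fun x hx => ⟨hyU x hx, hy _ (Finset.mem_image_of_mem _ hx)⟩⟩
  have hlim : Tendsto s atTop (𝓝[I] t) := tendsto_nhdsWithin_iff.2
    ⟨tendsto_of_dist_succ_le_half fun n => (hsr n (n + 1) n.lt_succ_self).1,
      .of_forall fun n => (hsI n).1⟩
  refine not_tendsto_fineF_of_forall_finite (x := f ∘ s) (fun n => hQ _ (hsI n).1 (hsI n).2)
    (fun v => ?_) (Tendsto.comp (hcont t ht) hlim)
  refine Set.Subsingleton.finite fun m hm n hn => ?_
  by_contra hmn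
  wlog h : m < n generalizing m n
  · exact this n hn m hm (Ne.symm hmn) (lt_of_le_of_ne (not_lt.1 h) (Ne.symm hmn))
  rw [mem_ofPred_eq, line_eq_line_sub_of_mem hm (ne_of_Q_sub_pos (hQ _ (hsI m).1 (hsI m).2))]
    at hn
  exact (hsr m n h).2 hn

lemma eventually_forall_Icc_nhdsGT {α : Type*} [LinearOrder α] [TopologicalSpace α]
    [OrderTopology α] [NoMaxOrder α] {p : α → Prop} {t : α} (ht : p t)
    (h : ∀ᶠ s in 𝓝[>] t, p s) : ∀ᶠ y in 𝓝[>] t, ∀ s ∈ Icc t y, p s := by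
  obtain ⟨u, hu, hsub⟩ := mem_nhdsGT_iff_exists_Ioo_subset.1 h
  filter_upwards [Ioo_mem_nhdsGT hu] with y hy s hs
  rcases hs.1.eq_or_lt with rfl | hts
  · exact ht
  · exact hsub ⟨hts, hs.2.trans_lt hy.2⟩

lemma eventually_forall_Icc_nhdsLT {α : Type*} [LinearOrder α] [TopologicalSpace α]
    [OrderTopology α] [NoMinOrder α] {p : α → Prop} {t : α} (ht : p t)
    (h : ∀ᶠ s in 𝓝[<] t, p s) : ∀ᶠ x in 𝓝[<] t, ∀ s ∈ Icc x t, p s := by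
  obtain ⟨l, hl, hsub⟩ := mem_nhdsLT_iff_exists_Ioo_subset.1 h
  filter_upwards [Ioo_mem_nhdsLT hl] with x hx s hs
  rcases hs.2.eq_or_lt with rfl | hst
  · exact ht
  · exact hsub ⟨hx.1.trans_le hs.1, hst⟩

/-- **Zeeman.** If `f : [0,1] → M` is continuous for the Fine topology `F`
and strictly order-preserving for the chronological order, then its image is a piecewise
linear path made of finitely many intervals along time axes. -/
theorem fineF_continuous_orderPreserving_piecewiseLinear (f : ℝ → M)
    (hcont : @ContinuousOn ℝ M _ FineF f (Set.Icc 0 1))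
    (hord : ∀ s ∈ Set.Icc (0:ℝ) 1, ∀ t ∈ Set.Icc (0:ℝ) 1, s < t → chron (f s) (f t)) :
    ∃ n : ℕ, ∃ τ : Fin (n + 1) → ℝ, τ 0 = 0 ∧ τ (Fin.last n) = 1 ∧ StrictMono τ ∧
      ∀ i : Fin n, ∃ a v : M, Q v > 0 ∧
        ∀ s ∈ Set.Icc (τ i.castSucc) (τ i.succ), ∃ c : ℝ, f s = a + c • v := by
  have hQ : ∀ t ∈ Icc (0 : ℝ) 1, ∀ s ∈ Icc (0 : ℝ) 1, s ≠ t → 0 < Q (f s - f t) := by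
    intro t ht s hs hst
    rcases hst.lt_or_gt with h | h
    · rw [Q_sub_comm]; exact (hord s hs t ht h).1
    · exact (hord t ht s hs h).1
  refine (exists_relSeries_of_forall_eventually zero_le_one
    (R := fun x y => ∃ a v : M, Q v > 0 ∧ ∀ s ∈ Icc x y, ∃ c : ℝ, f s = a + c • v)
    (fun t ht => ?_) (fun t ht => ?_)).elim fun p ⟨hp0, hp1⟩ =>
      ⟨p.length, p, hp0, hp1, Fin.strictMono_iff_lt_succ.2 fun i => (p.step i).1,
        fun i => (p.step i).2⟩
  · have htI : t ∈ Icc (0 : ℝ) 1 := Ioc_subset_Icc_self ht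
    obtain ⟨v, hv, hev⟩ := exists_eventually_mem_line hcont htI (hQ t htI) nhdsWithin_le_nhds
      (mem_of_superset (Ico_mem_nhdsLT ht.1) fun s hs => ⟨⟨hs.1, hs.2.le.trans ht.2⟩, hs.2.ne⟩)
      (nhdsLT_basis t) fun _ _ => isPreconnected_Ioo
    exact (eventually_forall_Icc_nhdsLT (p := (f · ∈ line (f t) v)) (mem_line_self _ _) hev).mono
      fun _ h => ⟨f t, v, hv, h⟩
  · have htI : t ∈ Icc (0 : ℝ) 1 := Ico_subset_Icc_self ht
    obtain ⟨v, hv, hev⟩ := exists_eventually_mem_line hcont htI (hQ t htI) nhdsWithin_le_nhds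
      (mem_of_superset (Ioc_mem_nhdsGT ht.2) fun s hs => ⟨⟨ht.1.trans hs.1.le, hs.2⟩, hs.1.ne'⟩)
      (nhdsGT_basis t) fun _ _ => isPreconnected_Ioo
    exact (eventually_forall_Icc_nhdsGT (p := (f · ∈ line (f t) v)) (mem_line_self _ _) hev).mono
      fun _ h => ⟨f t, v, hv, h⟩
end
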